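/- The translation tr₂ from L_KC to L′_KC, defined by the clauses tr₂(Y=y) = []Y=y; tr₂(¬ξ) = ¬tr₂(ξ); tr₂(ξ₁∧ξ₂) = tr₂(ξ₁)∧tr₂(ξ₂); tr₂(Kξ) = K tr₂(ξ); tr₂([X⃗:=x⃗]Y=y) = [X⃗:=x⃗]Y=y; tr₂([X⃗:=x⃗]¬ξ) = tr₂(¬[X⃗:=x⃗]ξ); tr₂([X⃗:=x⃗](ξ₁∧ξ₂)) = tr₂([X⃗:=x⃗]ξ₁ ∧ [X⃗:=x⃗]ξ₂); tr₂([X⃗:=x⃗]Kξ) = tr₂(K[X⃗:=x⃗]ξ); tr₂([X⃗:=x⃗][Y⃗:=y⃗]ξ) = tr₂([X⃗′:=x⃗′, Y⃗:=y⃗]ξ) with X⃗′ = X⃗ \ Y⃗, is well defined and satisfies, for every L_KC formula ξ: (1) tr₂(ξ) ∈ L′_KC; (2) ξ ↔ tr₂(ξ) is provable in the system L_KC; (3) ξ ↔ tr₂(ξ) is valid over epistemic recursive causal models. -/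

import Mathlib

open Classical

/-- A finite signature: variables sorted into exogenous and endogenous, each with a
finite nonempty range of values. -/
structure Sig : Type 1 where
  Var : Type
  exo : Var → Prop
  Val : Var → Type
  [decEqVar : DecidableEq Var]
  [finVar : Fintype Var]
  [neVar : Nonempty Var]
  [decEqVal : ∀ X : Var, DecidableEq (Val X)]
  [finVal : ∀ X : Var, Fintype (Val X)]
  [neVal : ∀ X : Var, Nonempty (Val X)]

attribute [instance] Sig.decEqVar Sig.finVar Sig.neVar Sig.decEqVal Sig.finVal Sig.neVal

variable {S : Sig}

/-- A valuation: a value for each variable. -/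
abbrev Env (S : Sig) : Type := ∀ X : S.Var, S.Val X

instance : Nonempty (Env S) := ⟨fun X => Classical.arbitrary (S.Val X)⟩

/-- Values for all variables other than `V`. -/
abbrev Others (S : Sig) (V : S.Var) : Type := ∀ X : {X : S.Var // X ≠ V}, S.Val X.val

/-- The restriction of a valuation to the variables other than `V`. -/
def Env.restrict (A : Env S) (V : S.Var) : Others S V := fun X => A X.val

/-- A family of structural functions (only the components at endogenous variables
are meaningful). -/
abbrev StructFuns (S : Sig) : Type := ∀ V : S.Var, Others S V → S.Val V

/-- A valuation complies with the structural functions: the value of each endogenous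
variable is obtained by applying its structural function to the values of all
other variables. -/
def Complies (F : StructFuns S) (A : Env S) : Prop :=
  ∀ V : S.Var, ¬ S.exo V → A V = F V (A.restrict V)

/-- The endogenous variable `V` is directly causally affected by `X` under `F`. -/
def DirAff (F : StructFuns S) (X V : S.Var) : Prop :=
  ¬ S.exo V ∧ ∃ (h : X ≠ V) (g : Others S V) (x₁ x₂ : S.Val X),
    x₁ ≠ x₂ ∧
      F V (Function.update g ⟨X, h⟩ x₁) ≠ F V (Function.update g ⟨X, h⟩ x₂)

/-- `F` is recursive: the transitive closure of the direct causal dependence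
relation is asymmetric (transitivity is automatic for `Relation.TransGen`). -/
def RecursiveF (F : StructFuns S) : Prop :=
  ∀ a b : S.Var, Relation.TransGen (DirAff F) a b → ¬ Relation.TransGen (DirAff F) b a

/-- An assignment of values to a set of pairwise distinct variables. -/
abbrev Intervention (S : Sig) : Type := ∀ X : S.Var, Option (S.Val X)

/-- The empty assignment. -/
def iEmpty (S : Sig) : Intervention S := fun _ => none

/-- Extend an assignment by additionally setting `Y` to `y` (overriding). -/
def iUpd (I : Intervention S) (Y : S.Var) (y : S.Val Y) : Intervention S :=
  Function.update I Y (some y)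

/-- Combine assignments, the second overriding the first:  `[X⃗ := x⃗, Y⃗ := y⃗]`. -/
def icomp (I J : Intervention S) : Intervention S := fun W =>
  match J W with
  | some v => some v
  | none => I W

/-- The intervened family of structural functions: intervened variables get the
constant function returning the assigned value; the rest are unchanged. -/
def intF (F : StructFuns S) (I : Intervention S) : StructFuns S :=
  fun V g => (I V).getD (F V g)

/-- `A'` is the result of intervening with `I` on the valuation `A` (w.r.t. `F`):
exogenous intervened variables get the assigned value, exogenous non-intervened
variables keep their value, and each endogenous variable complies with its new
structural function. -/
def IntervenedVal (F : StructFuns S) (A : Env S) (I : Intervention S) (A' : Env S) : Prop :=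
  (∀ X : S.Var, S.exo X → ∀ v : S.Val X, I X = some v → A' X = v) ∧
  (∀ X : S.Var, S.exo X → I X = none → A' X = A X) ∧
  (∀ V : S.Var, ¬ S.exo V → A' V = intF F I V (A'.restrict V))

/-- The intervened valuation (unique when `F` is recursive). -/
noncomputable def intVal (F : StructFuns S) (A : Env S) (I : Intervention S) : Env S :=
  Classical.epsilon (IntervenedVal F A I)

/-- The language L_KC: atoms `Y = y`, negation, conjunction, knowledge, and
interventionist counterfactual operators. -/
inductive Form (S : Sig) : Type where
  | eq (Y : S.Var) (y : S.Val Y) : Form S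
  | neg (φ : Form S) : Form S
  | conj (φ ψ : Form S) : Form S
  | know (φ : Form S) : Form S
  | int (I : Intervention S) (φ : Form S) : Form S

namespace Form

/-- Material implication, defined from `¬` and `∧` as usual. -/
def impl (φ ψ : Form S) : Form S := Form.neg (Form.conj φ (Form.neg ψ))

/-- Disjunction, defined from `¬` and `∧` as usual. -/
def orF (φ ψ : Form S) : Form S := Form.neg (Form.conj (Form.neg φ) (Form.neg ψ))

/-- Biconditional. -/
def iffF (φ ψ : Form S) : Form S := Form.conj (impl φ ψ) (impl ψ φ)

end Form

/-- A canonical contradiction. -/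
noncomputable def botF (S : Sig) : Form S :=
  let X : S.Var := Classical.arbitrary S.Var
  let x : S.Val X := Classical.arbitrary (S.Val X)
  Form.conj (Form.eq X x) (Form.neg (Form.eq X x))

/-- A canonical tautology. -/
noncomputable def topF (S : Sig) : Form S := Form.neg (botF S)

/-- Disjunction of a list of formulas (the empty disjunction is a contradiction). -/
noncomputable def bigOr : List (Form S) → Form S
  | [] => botF S
  | φ :: l => l.foldl Form.orF φ

/-- Conjunction of a list of formulas (the empty conjunction is a tautology). -/
noncomputable def bigConj : List (Form S) → Form S
  | [] => topF S
  | φ :: l => l.foldl Form.conj φ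

/-- `φ` is an instance of a propositional tautology: it evaluates to `true` under
every Boolean valuation that respects negation and conjunction (treating all
other formulas as atoms). -/
def Tauto (φ : Form S) : Prop :=
  ∀ v : Form S → Bool,
    (∀ ψ : Form S, v (Form.neg ψ) = !(v ψ)) →
    (∀ ψ χ : Form S, v (Form.conj ψ χ) = (v ψ && v χ)) →
    v φ = true

/-- The assignment `[Z⃗ := z⃗, X := x]` where `Z⃗` lists all variables other than
`X` and `V`, used in the formula `X ⇝ V`. -/
def ltInt (X V : S.Var) (g : ∀ W : {W : S.Var // W ≠ X ∧ W ≠ V}, S.Val W.val)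
    (x : S.Val X) : Intervention S := fun W =>
  if h : W = X then some (h.symm ▸ x)
  else if h' : W = V then none
  else some (g ⟨W, ⟨h, h'⟩⟩)

/-- The formula `X ⇝ V`: the disjunction, over tuples `z⃗` of values for all
variables other than `X` and `V`, distinct values `x₁ ≠ x₂` of `X` and distinct
values `v₁ ≠ v₂` of `V`, of `[Z⃗:=z⃗, X:=x₁]V=v₁ ∧ [Z⃗:=z⃗, X:=x₂]V=v₂`. -/
noncomputable def leadsTo (X V : S.Var) : Form S :=
  bigOr ((Finset.univ.filter
      (fun p : (∀ W : {W : S.Var // W ≠ X ∧ W ≠ V}, S.Val W.val) ×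
          (S.Val X × S.Val X) × (S.Val V × S.Val V) =>
        p.2.1.1 ≠ p.2.1.2 ∧ p.2.2.1 ≠ p.2.2.2)).toList.map
    (fun p =>
      Form.conj
        (Form.int (ltInt X V p.1 p.2.1.1) (Form.eq V p.2.2.1))
        (Form.int (ltInt X V p.1 p.2.1.2) (Form.eq V p.2.2.2))))

/-- The chain `X₀ ⇝ X₁ ∧ ⋯ ∧ X_k ⇝ X_{k+1}`. -/
noncomputable def chainConj (X : ℕ → S.Var) : ℕ → Form S
  | 0 => leadsTo (X 0) (X 1)
  | n + 1 => Form.conj (chainConj X n) (leadsTo (X (n + 1)) (X (n + 2)))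

/-- `ψ₁ → (ψ₂ → ⋯ → (ψₙ → φ))` for a list of premises. -/
def impsFrom : List (Form S) → Form S → Form S
  | [], φ => φ
  | ψ :: l, φ => Form.impl ψ (impsFrom l φ)

/-- Satisfaction of an L_KC formula at a pointed epistemic causal model
`(⟨F, T⟩, A)`. -/
def SatK : Form S → StructFuns S → Set (Env S) → Env S → Prop
  | Form.eq Y y, _, _, A => A Y = y
  | Form.neg φ, F, T, A => ¬ SatK φ F T A
  | Form.conj φ ψ, F, T, A => SatK φ F T A ∧ SatK ψ F T A
  | Form.know φ, F, T, _ => ∀ B ∈ T, SatK φ F T B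
  | Form.int I φ, F, T, A =>
      SatK φ (intF F I) ((fun B => intVal F B I) '' T) (intVal F A I)

/-- The proof system L_KC: the system L_C extended with the S5 principles for K
and the axioms CM and KL. -/
inductive ThmKC : Form S → Prop where
  | taut : ∀ {φ : Form S}, Tauto φ → ThmKC φ
  | mp : ∀ {φ ψ : Form S}, ThmKC (Form.impl φ ψ) → ThmKC φ → ThmKC ψ
  | a1 : ∀ (I : Intervention S) (Y : S.Var) (y y' : S.Val Y), y ≠ y' →
      ThmKC (Form.impl (Form.int I (Form.eq Y y)) (Form.neg (Form.int I (Form.eq Y y'))))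
  | a2 : ∀ (I : Intervention S) (Y : S.Var),
      ThmKC (bigOr (((Finset.univ : Finset (S.Val Y)).toList).map
        (fun y => Form.int I (Form.eq Y y))))
  | a3 : ∀ (I : Intervention S) (Y Z : S.Var) (y : S.Val Y) (z : S.Val Z),
      ThmKC (Form.impl (Form.conj (Form.int I (Form.eq Y y)) (Form.int I (Form.eq Z z)))
        (Form.int (iUpd I Y y) (Form.eq Z z)))
  | a4 : ∀ (I : Intervention S) (Y : S.Var) (y : S.Val Y),
      ThmKC (Form.int (iUpd I Y y) (Form.eq Y y))
  | a5 : ∀ (I : Intervention S) (Y Z : S.Var) (y : S.Val Y) (z : S.Val Z), Y ≠ Z →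
      ThmKC (Form.impl
        (Form.conj (Form.int (iUpd I Y y) (Form.eq Z z)) (Form.int (iUpd I Z z) (Form.eq Y y)))
        (Form.int I (Form.eq Z z)))
  | a6 : ∀ (X : ℕ → S.Var) (k : ℕ),
      (∀ i : ℕ, i ≤ k → X i ≠ X (i + 1)) → X (k + 1) ≠ X 0 →
      ThmKC (Form.impl (chainConj X k) (Form.neg (leadsTo (X (k + 1)) (X 0))))
  | a7 : ∀ (I : Intervention S) (U : S.Var) (u : S.Val U), S.exo U → I U = none →
      ThmKC (Form.iffF (Form.int (iEmpty S) (Form.eq U u)) (Form.int I (Form.eq U u)))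
  | aEmpty : ∀ (Y : S.Var) (y : S.Val Y),
      ThmKC (Form.iffF (Form.eq Y y) (Form.int (iEmpty S) (Form.eq Y y)))
  | aNeg : ∀ (I : Intervention S) (φ : Form S),
      ThmKC (Form.iffF (Form.int I (Form.neg φ)) (Form.neg (Form.int I φ)))
  | aConj : ∀ (I : Intervention S) (φ ψ : Form S),
      ThmKC (Form.iffF (Form.int I (Form.conj φ ψ))
        (Form.conj (Form.int I φ) (Form.int I ψ)))
  | aIntInt : ∀ (I J : Intervention S) (φ : Form S),
      ThmKC (Form.iffF (Form.int I (Form.int J φ)) (Form.int (icomp I J) φ))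
  | axK : ∀ (φ ψ : Form S),
      ThmKC (Form.impl (Form.know (Form.impl φ ψ))
        (Form.impl (Form.know φ) (Form.know ψ)))
  | necK : ∀ {φ : Form S}, ThmKC φ → ThmKC (Form.know φ)
  | axT : ∀ (φ : Form S), ThmKC (Form.impl (Form.know φ) φ)
  | ax4 : ∀ (φ : Form S), ThmKC (Form.impl (Form.know φ) (Form.know (Form.know φ)))
  | ax5 : ∀ (φ : Form S),
      ThmKC (Form.impl (Form.neg (Form.know φ)) (Form.know (Form.neg (Form.know φ))))
  | cm : ∀ (I : Intervention S) (φ : Form S),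
      ThmKC (Form.iffF (Form.int I (Form.know φ)) (Form.know (Form.int I φ)))
  | kl : ∀ (I : Intervention S) (Y : S.Var) (y : S.Val Y), ¬ S.exo Y →
      (∀ W : S.Var, (I W).isSome ↔ W ≠ Y) →
      ThmKC (Form.impl (Form.int I (Form.eq Y y))
        (Form.know (Form.int I (Form.eq Y y))))

/-- Strong derivability from a set of premises in L_KC. -/
def ProvKC (Γ : Set (Form S)) (φ : Form S) : Prop :=
  ∃ l : List (Form S), (∀ ψ ∈ l, ψ ∈ Γ) ∧ ThmKC (impsFrom l φ)

/-- The language L′_KC: formulas generated from `[X⃗:=x⃗]Y=y` by `¬`, `∧` and `K`. -/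
inductive IsKC' : Form S → Prop where
  | intEq : ∀ (I : Intervention S) (Y : S.Var) (y : S.Val Y),
      IsKC' (Form.int I (Form.eq Y y))
  | neg : ∀ {φ : Form S}, IsKC' φ → IsKC' (Form.neg φ)
  | conj : ∀ {φ ψ : Form S}, IsKC' φ → IsKC' ψ → IsKC' (Form.conj φ ψ)
  | know : ∀ {φ : Form S}, IsKC' φ → IsKC' (Form.know φ)

/-- The translation tr₂ from L_KC to L′_KC, given as a relation defined by the
recursive clauses of the definition (the theorem below asserts that it is well
defined, i.e. total and functional). -/
inductive Tr2 : Form S → Form S → Prop where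
  | eq : ∀ (Y : S.Var) (y : S.Val Y),
      Tr2 (Form.eq Y y) (Form.int (iEmpty S) (Form.eq Y y))
  | neg : ∀ {φ φ' : Form S}, Tr2 φ φ' → Tr2 (Form.neg φ) (Form.neg φ')
  | conj : ∀ {φ φ' ψ ψ' : Form S}, Tr2 φ φ' → Tr2 ψ ψ' →
      Tr2 (Form.conj φ ψ) (Form.conj φ' ψ')
  | know : ∀ {φ φ' : Form S}, Tr2 φ φ' → Tr2 (Form.know φ) (Form.know φ')
  | intEq : ∀ (I : Intervention S) (Y : S.Var) (y : S.Val Y),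
      Tr2 (Form.int I (Form.eq Y y)) (Form.int I (Form.eq Y y))
  | intNeg : ∀ {I : Intervention S} {φ χ : Form S},
      Tr2 (Form.neg (Form.int I φ)) χ → Tr2 (Form.int I (Form.neg φ)) χ
  | intConj : ∀ {I : Intervention S} {φ ψ χ : Form S},
      Tr2 (Form.conj (Form.int I φ) (Form.int I ψ)) χ →
      Tr2 (Form.int I (Form.conj φ ψ)) χ
  | intKnow : ∀ {I : Intervention S} {φ χ : Form S},
      Tr2 (Form.know (Form.int I φ)) χ → Tr2 (Form.int I (Form.know φ)) χ
  | intInt : ∀ {I J : Intervention S} {φ χ : Form S},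
      Tr2 (Form.int (icomp I J) φ) χ → Tr2 (Form.int I (Form.int J φ)) χ

/-! tr₂ is a recursive function whose graph is the relation `Tr2`. Each clause replaces a
formula by one that is equivalent by A[], A¬, A∧, CM or A[][], which gives provability of
`ξ ↔ tr₂(ξ)` at once. For validity, the point is that in a recursive model the intervened
valuation exists and is unique, by well-founded recursion along direct causal dependence (a
structural function only sees the variables that directly affect it); uniqueness makes two successive interventions agree with the merged one, and makes the empty
intervention the identity on complying valuations. -/

-- `sizeOf` is constant on assignments, so the last clause removes one constructor.
def tr2 : Form S → Form S
  | .eq Y y => .int (iEmpty S) (.eq Y y)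
  | .neg φ => .neg (tr2 φ)
  | .conj φ ψ => .conj (tr2 φ) (tr2 ψ)
  | .know φ => .know (tr2 φ)
  | .int I (.eq Y y) => .int I (.eq Y y)
  | .int I (.neg φ) => .neg (tr2 (.int I φ))
  | .int I (.conj φ ψ) => .conj (tr2 (.int I φ)) (tr2 (.int I ψ))
  | .int I (.know φ) => .know (tr2 (.int I φ))
  | .int I (.int J φ) => tr2 (.int (icomp I J) φ)

theorem tr2_spec (ξ : Form S) : Tr2 ξ (tr2 ξ) := by
  induction ξ using tr2.induct with
  | case1 Y y => rw [tr2]; exact .eq Y y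
  | case2 φ ih => rw [tr2]; exact .neg ih
  | case3 φ ψ ih₁ ih₂ => rw [tr2]; exact .conj ih₁ ih₂
  | case4 φ ih => rw [tr2]; exact .know ih
  | case5 I Y y => rw [tr2]; exact .intEq I Y y
  | case6 I φ ih => rw [tr2]; exact .intNeg (.neg ih)
  | case7 I φ ψ ih₁ ih₂ => rw [tr2]; exact .intConj (.conj ih₁ ih₂)
  | case8 I φ ih => rw [tr2]; exact .intKnow (.know ih)
  | case9 I J φ ih => rw [tr2]; exact .intInt ih

theorem Tr2.eq_tr2 {ξ χ : Form S} (h : Tr2 ξ χ) : χ = tr2 ξ := by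
  induction h with
  | eq | intEq => rw [tr2]
  | neg _ ih | know _ ih | intNeg _ ih | intConj _ ih | intKnow _ ih | intInt _ ih =>
    simp only [ih, tr2]
  | conj _ _ ih₁ ih₂ => simp only [ih₁, ih₂, tr2]

theorem tr2_iff {ξ χ : Form S} : Tr2 ξ χ ↔ χ = tr2 ξ :=
  ⟨Tr2.eq_tr2, fun h => h ▸ tr2_spec ξ⟩

theorem isKC'_tr2 (ξ : Form S) : IsKC' (tr2 ξ) := by
  induction ξ using tr2.induct with
  | case1 Y y => rw [tr2]; exact .intEq _ Y y
  | case2 φ ih | case6 I φ ih => rw [tr2]; exact .neg ih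
  | case3 φ ψ ih₁ ih₂ | case7 I φ ψ ih₁ ih₂ => rw [tr2]; exact .conj ih₁ ih₂
  | case4 φ ih | case8 I φ ih => rw [tr2]; exact .know ih
  | case5 I Y y => rw [tr2]; exact .intEq I Y y
  | case9 I J φ ih => rw [tr2]; exact ih

namespace ThmKC

variable {φ ψ χ φ' ψ' : Form S}

theorem mp_tauto (t : Tauto (Form.impl φ ψ)) (h : ThmKC φ) : ThmKC ψ :=
  mp (taut t) h

theorem mp_tauto₂ (t : Tauto (Form.impl φ (Form.impl ψ χ))) (h₁ : ThmKC φ) (h₂ : ThmKC ψ) :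
    ThmKC χ :=
  mp (mp (taut t) h₁) h₂

theorem iff_refl (φ : Form S) : ThmKC (Form.iffF φ φ) :=
  taut fun v hn hc => by
    simp only [Form.impl, Form.iffF, hn, hc]; cases v φ <;> rfl

theorem iff_intro (h₁ : ThmKC (Form.impl φ ψ)) (h₂ : ThmKC (Form.impl ψ φ)) :
    ThmKC (Form.iffF φ ψ) :=
  mp_tauto₂ (fun v hn hc => by
    simp only [Form.impl, Form.iffF, hn, hc]; cases v φ <;> cases v ψ <;> rfl) h₁ h₂

theorem iff_mp (h : ThmKC (Form.iffF φ ψ)) : ThmKC (Form.impl φ ψ) :=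
  mp_tauto (fun v hn hc => by
    simp only [Form.impl, Form.iffF, hn, hc]; cases v φ <;> cases v ψ <;> rfl) h

theorem iff_mpr (h : ThmKC (Form.iffF φ ψ)) : ThmKC (Form.impl ψ φ) :=
  mp_tauto (fun v hn hc => by
    simp only [Form.impl, Form.iffF, hn, hc]; cases v φ <;> cases v ψ <;> rfl) h

theorem iff_trans (h₁ : ThmKC (Form.iffF φ ψ)) (h₂ : ThmKC (Form.iffF ψ χ)) :
    ThmKC (Form.iffF φ χ) :=
  mp_tauto₂ (fun v hn hc => by
    simp only [Form.impl, Form.iffF, hn, hc]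
    cases v φ <;> cases v ψ <;> cases v χ <;> rfl) h₁ h₂

theorem iff_neg (h : ThmKC (Form.iffF φ ψ)) : ThmKC (Form.iffF (Form.neg φ) (Form.neg ψ)) :=
  mp_tauto (fun v hn hc => by
    simp only [Form.impl, Form.iffF, hn, hc]; cases v φ <;> cases v ψ <;> rfl) h

theorem iff_conj (h₁ : ThmKC (Form.iffF φ φ')) (h₂ : ThmKC (Form.iffF ψ ψ')) :
    ThmKC (Form.iffF (Form.conj φ ψ) (Form.conj φ' ψ')) :=
  mp_tauto₂ (fun v hn hc => by
    simp only [Form.impl, Form.iffF, hn, hc]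
    cases v φ <;> cases v φ' <;> cases v ψ <;> cases v ψ' <;> rfl) h₁ h₂

theorem know_mono (h : ThmKC (Form.impl φ ψ)) : ThmKC (Form.impl (Form.know φ) (Form.know ψ)) :=
  mp (axK φ ψ) (necK h)

theorem iff_know (h : ThmKC (Form.iffF φ ψ)) :
    ThmKC (Form.iffF (Form.know φ) (Form.know ψ)) :=
  iff_intro (know_mono h.iff_mp) (know_mono h.iff_mpr)

end ThmKC

theorem thmKC_iffF_tr2 (ξ : Form S) : ThmKC (Form.iffF ξ (tr2 ξ)) := by
  induction ξ using tr2.induct with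
  | case1 Y y => rw [tr2]; exact .aEmpty Y y
  | case2 φ ih => rw [tr2]; exact ih.iff_neg
  | case3 φ ψ ih₁ ih₂ => rw [tr2]; exact ih₁.iff_conj ih₂
  | case4 φ ih => rw [tr2]; exact ih.iff_know
  | case5 I Y y => rw [tr2]; exact .iff_refl _
  | case6 I φ ih => rw [tr2]; exact (ThmKC.aNeg I φ).iff_trans ih.iff_neg
  | case7 I φ ψ ih₁ ih₂ => rw [tr2]; exact (ThmKC.aConj I φ ψ).iff_trans (ih₁.iff_conj ih₂)
  | case8 I φ ih => rw [tr2]; exact (ThmKC.cm I φ).iff_trans ih.iff_know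
  | case9 I J φ ih => rw [tr2]; exact (ThmKC.aIntInt I J φ).iff_trans ih

section Semantics

variable {F : StructFuns S}

theorem DirAff.of_intF {I : Intervention S} {X V : S.Var} (h : DirAff (intF F I) X V) :
    DirAff F X V := by
  obtain ⟨hV, hXV, g, x₁, x₂, hx, hF⟩ := h
  refine ⟨hV, hXV, g, x₁, x₂, hx, fun hF' => hF ?_⟩
  cases hI : I V <;> simp [intF, hI, hF']

theorem RecursiveF.intF (hF : RecursiveF F) (I : Intervention S) : RecursiveF (intF F I) :=
  fun a b hab hba =>
    hF a b (Relation.TransGen.mono (fun _ _ => DirAff.of_intF) _ _ hab)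
      (Relation.TransGen.mono (fun _ _ => DirAff.of_intF) _ _ hba)

theorem RecursiveF.wellFounded (hF : RecursiveF F) : WellFounded (DirAff F) :=
  have : Std.Irrefl (Relation.TransGen (DirAff F)) := ⟨fun a h => hF a a h h⟩
  have : IsTrans S.Var (Relation.TransGen (DirAff F)) := ⟨fun _ _ _ => .trans⟩
  Subrelation.wf Relation.TransGen.single (Finite.wellFounded_of_trans_of_irrefl _)

theorem apply_update_eq_of_not_dirAff {V : S.Var} (hV : ¬ S.exo V) {X : {X : S.Var // X ≠ V}}
    (hX : ¬ DirAff F X V) (g : Others S V) (a b : S.Val X) :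
    F V (Function.update g X a) = F V (Function.update g X b) := by
  by_contra hne
  exact hX ⟨hV, X.prop, g, a, b, fun hab => hne (hab ▸ rfl), hne⟩

theorem apply_eq_of_eqOn_dirAff {V : S.Var} (hV : ¬ S.exo V) {g g' : Others S V}
    (h : ∀ X : {X : S.Var // X ≠ V}, DirAff F X V → g X = g' X) : F V g = F V g' := by
  suffices ∀ s : Finset {X : S.Var // X ≠ V}, F V (s.piecewise g' g) = F V g by
    simpa using (this Finset.univ).symm
  intro s
  induction s using Finset.induction_on with
  | empty => simp
  | insert X s hXs ih =>
    rw [Finset.piecewise_insert, ← ih]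
    by_cases hX : DirAff F X V
    · rw [← h X hX, ← Finset.piecewise_eq_of_notMem s g' g hXs, Function.update_eq_self]
    · conv_rhs => rw [← Function.update_eq_self X (s.piecewise g' g)]
      exact apply_update_eq_of_not_dirAff hV hX _ _ _

theorem exists_intervenedVal (hF : RecursiveF F) (A : Env S) (I : Intervention S) :
    ∃ A', IntervenedVal F A I A' := by
  have hwf := (hF.intF I).wellFounded
  let A' : Env S := hwf.fix fun V rec =>
    if S.exo V then (I V).getD (A V)
    else intF F I V fun X => if h : DirAff (intF F I) X V then rec X h else A X
  have hA' : ∀ V, A' V = if S.exo V then (I V).getD (A V)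
      else intF F I V fun X => if DirAff (intF F I) X V then A' X else A X :=
    fun V => by unfold A'; rw [hwf.fix_eq]; simp only [dite_eq_ite]
  refine ⟨A', fun X hX v hv => ?_, fun X hX hv => ?_, fun V hV => ?_⟩
  · simp [hA' X, hX, hv]
  · simp [hA' X, hX, hv]
  · rw [hA' V, if_neg hV]
    refine apply_eq_of_eqOn_dirAff hV fun X hX => ?_
    simp [hX, Env.restrict]

theorem IntervenedVal.unique (hF : RecursiveF F) {A A' A'' : Env S} {I : Intervention S}
    (h' : IntervenedVal F A I A') (h'' : IntervenedVal F A I A'') : A' = A'' := by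
  funext V
  induction V using (hF.intF I).wellFounded.induction with
  | _ V ih =>
    by_cases hV : S.exo V
    · cases hI : I V with
      | some v => rw [h'.1 V hV v hI, h''.1 V hV v hI]
      | none => rw [h'.2.1 V hV hI, h''.2.1 V hV hI]
    · rw [h'.2.2 V hV, h''.2.2 V hV]
      exact apply_eq_of_eqOn_dirAff hV fun X hX => ih X hX

theorem intervenedVal_intVal (hF : RecursiveF F) (A : Env S) (I : Intervention S) :
    IntervenedVal F A I (intVal F A I) :=
  Classical.epsilon_spec (exists_intervenedVal hF A I)

theorem intVal_eq_of_intervenedVal (hF : RecursiveF F) {A A' : Env S} {I : Intervention S}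
    (h : IntervenedVal F A I A') : intVal F A I = A' :=
  (intervenedVal_intVal hF A I).unique hF h

theorem intVal_iEmpty (hF : RecursiveF F) {A : Env S} (hA : Complies F A) :
    intVal F A (iEmpty S) = A :=
  intVal_eq_of_intervenedVal hF ⟨fun _ _ _ hv => by simp [iEmpty] at hv, fun _ _ _ => rfl,
    fun V hV => by simpa [intF, iEmpty] using hA V hV⟩

theorem intF_intF (F : StructFuns S) (I J : Intervention S) :
    intF (intF F I) J = intF F (icomp I J) := by
  funext V g
  cases hJ : J V <;> simp [intF, icomp, hJ]

theorem intVal_intVal (hF : RecursiveF F) (A : Env S) (I J : Intervention S) :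
    intVal (intF F I) (intVal F A I) J = intVal F A (icomp I J) := by
  obtain ⟨hI₁, hI₂, -⟩ := intervenedVal_intVal hF A I
  obtain ⟨hIJ₁, hIJ₂, hIJ₃⟩ := intervenedVal_intVal hF A (icomp I J)
  refine intVal_eq_of_intervenedVal (hF.intF I)
    ⟨fun X hX v hv => hIJ₁ X hX v (by simp [icomp, hv]), fun X hX hv => ?_,
      fun V hV => by rw [intF_intF]; exact hIJ₃ V hV⟩
  cases hIX : I X with
  | some w => rw [hIJ₁ X hX w (by simp [icomp, hv, hIX]), hI₁ X hX w hIX]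
  | none => rw [hIJ₂ X hX (by simp [icomp, hv, hIX]), hI₂ X hX hIX]

theorem satK_int_int (hF : RecursiveF F) (T : Set (Env S)) (A : Env S) (I J : Intervention S)
    (φ : Form S) :
    SatK (Form.int I (Form.int J φ)) F T A ↔ SatK (Form.int (icomp I J) φ) F T A := by
  simp only [SatK, intF_intF, intVal_intVal hF, Set.image_image]

theorem satK_tr2 (hF : RecursiveF F) {T : Set (Env S)} (hT : ∀ B ∈ T, Complies F B)
    (ξ : Form S) : ∀ A ∈ T, (SatK ξ F T A ↔ SatK (tr2 ξ) F T A) := by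
  induction ξ using tr2.induct with
  | case1 Y y => intro A hA; rw [tr2]; simp only [SatK, intVal_iEmpty hF (hT A hA)]
  | case2 φ ih | case6 I φ ih => intro A hA; rw [tr2]; exact not_congr (ih A hA)
  | case3 φ ψ ih₁ ih₂ | case7 I φ ψ ih₁ ih₂ =>
    intro A hA; rw [tr2]; exact and_congr (ih₁ A hA) (ih₂ A hA)
  | case4 φ ih => intro A _; rw [tr2]; exact forall₂_congr ih
  | case5 I Y y => intro A _; rw [tr2]
  | case8 I φ ih => intro A _; rw [tr2]; exact Set.forall_mem_image.trans (forall₂_congr ih)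
  | case9 I J φ ih => intro A hA; rw [tr2]; exact (satK_int_int hF T A I J φ).trans (ih A hA)

end Semantics

/-- Theorem: the translation tr₂ is well defined (it assigns to each L_KC formula a
unique translation) and, for every L_KC formula `ξ`: (1) `tr₂(ξ)` is an L′_KC
formula; (2) `ξ ↔ tr₂(ξ)` is provable in the system L_KC; (3) `ξ ↔ tr₂(ξ)` is
valid over epistemic (recursive) causal models. -/
theorem tr2_well_defined_and_correct (S : Sig) (ξ : Form S) :
    (∃! ξ' : Form S, Tr2 ξ ξ') ∧
      ∀ ξ' : Form S, Tr2 ξ ξ' →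
        IsKC' ξ' ∧
        ThmKC (Form.iffF ξ ξ') ∧
        ∀ (F : StructFuns S) (T : Set (Env S)) (A : Env S),
          RecursiveF F → T.Nonempty → (∀ B ∈ T, Complies F B) → A ∈ T →
          (SatK ξ F T A ↔ SatK ξ' F T A) := by
  refine ⟨⟨tr2 ξ, tr2_spec ξ, fun _ h => tr2_iff.mp h⟩, fun ξ' h => ?_⟩
  obtain rfl := tr2_iff.mp h
  exact ⟨isKC'_tr2 ξ, thmKC_iffF_tr2 ξ, fun F T A hF _ hT hA => satK_tr2 hF hT ξ A hA⟩
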